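/- Let μ be a finite positive Borel measure on ℝ with μ(ℝ \ [0,2π)) = 0, and let 0 ≤ a < b < 2π. Then lim_{ε→0⁺} ∫_a^b (∫_{[0,2π)} P_D(1−ε, ψ − θ) dμ(θ)) dψ = μ((a,b)) + (1/2)·μ({a,b}). -/

import Mathlib

open MeasureTheory Filter Topology Real

noncomputable section

def PoissonD (r θ : ℝ) : ℝ :=
  (1 / (2 * Real.pi)) * (1 - r ^ 2) / (1 - 2 * r * Real.cos θ + r ^ 2)

def Hfun (r u : ℝ) : ℝ :=
  u / (2 * Real.pi) + (1 / Real.pi) * Real.arctan (r * Real.sin u / (1 - r * Real.cos u))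

lemma denom_pos {r : ℝ} (hr : |r| < 1) (u : ℝ) :
    0 < 1 - 2 * r * Real.cos u + r ^ 2 := by
  have h1 : |r * Real.cos u| < 1 := by
    rw [abs_mul]
    calc |r| * |Real.cos u| ≤ |r| * 1 :=
          mul_le_mul_of_nonneg_left (Real.abs_cos_le_one u) (abs_nonneg r)
      _ = |r| := mul_one _
      _ < 1 := hr
  have h2 : r * Real.cos u < 1 := lt_of_le_of_lt (le_abs_self _) h1
  nlinarith [Real.sin_sq_add_cos_sq u, sq_nonneg (r * Real.sin u), sq_nonneg (1 - r * Real.cos u)]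

lemma continuous_poisson {r : ℝ} (hr : |r| < 1) : Continuous (PoissonD r) := by
  unfold PoissonD
  exact continuous_const.div (by continuity) (fun u => ne_of_gt (denom_pos hr u))

lemma poisson_nonneg {r : ℝ} (hr : |r| < 1) (u : ℝ) : 0 ≤ PoissonD r u := by
  unfold PoissonD
  have h1 : 0 < 1 - r ^ 2 := by
    have := abs_lt.1 hr
    nlinarith
  have := denom_pos hr u
  have := Real.pi_pos
  positivity

lemma den2_pos {r : ℝ} (hr : |r| < 1) (u : ℝ) : 0 < 1 - r * Real.cos u := by
  have h1 : |r * Real.cos u| < 1 := by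
    rw [abs_mul]
    calc |r| * |Real.cos u| ≤ |r| * 1 :=
          mul_le_mul_of_nonneg_left (Real.abs_cos_le_one u) (abs_nonneg r)
      _ = |r| := mul_one _
      _ < 1 := hr
  have := lt_of_le_of_lt (le_abs_self _) h1
  linarith

lemma hasDerivAt_Hfun {r : ℝ} (hr : |r| < 1) (u : ℝ) :
    HasDerivAt (Hfun r) (PoissonD r u) u := by
  have hden := den2_pos hr u
  have hD := denom_pos hr u
  have hnum : HasDerivAt (fun u => r * Real.sin u) (r * Real.cos u) u :=
    (Real.hasDerivAt_sin u).const_mul r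
  have hden' : HasDerivAt (fun u => 1 - r * Real.cos u) (r * Real.sin u) u := by
    simpa using ((Real.hasDerivAt_cos u).const_mul r).const_sub 1
  have hs : HasDerivAt (fun u => r * Real.sin u / (1 - r * Real.cos u))
      ((r * Real.cos u * (1 - r * Real.cos u) - r * Real.sin u * (r * Real.sin u)) /
        (1 - r * Real.cos u) ^ 2) u := hnum.div hden' (ne_of_gt hden)
  have harc := hs.arctan
  have hlin : HasDerivAt (fun u : ℝ => u / (2 * Real.pi)) (1 / (2 * Real.pi)) u := by
    simpa using (hasDerivAt_id u).div_const (2 * Real.pi)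
  have hderiv := hlin.add (harc.const_mul (1 / Real.pi))
  have hnum2 : r * Real.cos u * (1 - r * Real.cos u) - r * Real.sin u * (r * Real.sin u)
      = r * Real.cos u - r ^ 2 := by
    linear_combination (-(r ^ 2)) * Real.sin_sq_add_cos_sq u
  have hpi := Real.pi_pos
  have h1s : 1 + (r * Real.sin u / (1 - r * Real.cos u)) ^ 2 =
      (1 - 2 * r * Real.cos u + r ^ 2) / (1 - r * Real.cos u) ^ 2 := by
    field_simp
    linear_combination (r ^ 2) * Real.sin_sq_add_cos_sq u
  have key : 1 / (2 * Real.pi) +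
      1 / Real.pi * (1 / (1 + (r * Real.sin u / (1 - r * Real.cos u)) ^ 2) *
        ((r * Real.cos u * (1 - r * Real.cos u) - r * Real.sin u * (r * Real.sin u)) /
          (1 - r * Real.cos u) ^ 2)) = PoissonD r u := by
    rw [h1s, hnum2, PoissonD]
    field_simp
    ring
  exact key ▸ hderiv


lemma integral_poisson {r : ℝ} (hr : |r| < 1) (c d : ℝ) :
    ∫ u in c..d, PoissonD r u = Hfun r d - Hfun r c :=
  intervalIntegral.integral_eq_sub_of_hasDerivAt (fun u _ => hasDerivAt_Hfun hr u)
    ((continuous_poisson hr).intervalIntegrable c d)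

lemma Hfun_period (r x : ℝ) : Hfun r (x + 2 * Real.pi) = Hfun r x + 1 := by
  unfold Hfun
  have hpi := Real.pi_pos
  rw [Real.sin_add_two_pi, Real.cos_add_two_pi]
  field_simp
  ring

lemma Hfun_zero (r : ℝ) : Hfun r 0 = 0 := by
  simp [Hfun]

lemma arctan_sin_div (x : ℝ) (hx0 : 0 < x) (hx2 : x < 2 * Real.pi) :
    Real.arctan (Real.sin x / (1 - Real.cos x)) = Real.pi / 2 - x / 2 := by
  have hpi := Real.pi_pos
  have hs : 0 < Real.sin (x / 2) :=
    Real.sin_pos_of_pos_of_lt_pi (by linarith) (by linarith)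
  have h1 : Real.sin x = 2 * Real.sin (x / 2) * Real.cos (x / 2) := by
    have := Real.sin_two_mul (x / 2)
    rw [show 2 * (x / 2) = x by ring] at this
    linarith
  have h2 : 1 - Real.cos x = 2 * Real.sin (x / 2) ^ 2 := by
    have hc := Real.cos_two_mul (x / 2)
    rw [show 2 * (x / 2) = x by ring] at hc
    have := Real.sin_sq_add_cos_sq (x / 2)
    nlinarith
  have h3 : Real.sin x / (1 - Real.cos x) = Real.cos (x / 2) / Real.sin (x / 2) := by
    rw [h1, h2]
    field_simp
  have h4 : Real.cos (x / 2) / Real.sin (x / 2) = Real.tan (Real.pi / 2 - x / 2) := by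
    rw [Real.tan_eq_sin_div_cos, Real.sin_pi_div_two_sub, Real.cos_pi_div_two_sub]
  rw [h3, h4, Real.arctan_tan (by linarith) (by linarith)]

lemma cos_ne_one {x : ℝ} (hx1 : -(2 * Real.pi) < x) (hx2 : x < 2 * Real.pi) (hx0 : x ≠ 0) :
    Real.cos x ≠ 1 := by
  intro h
  obtain ⟨n, hn⟩ := (Real.cos_eq_one_iff x).1 h
  have hpi := Real.pi_pos
  have h1 : (n : ℝ) < 1 := by nlinarith
  have h2 : (-1 : ℝ) < (n : ℝ) := by nlinarith
  have h1' : n < 1 := by exact_mod_cast h1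
  have h2' : (-1 : ℤ) < n := by exact_mod_cast h2
  have : n = 0 := by omega
  rw [this] at hn
  simp at hn
  exact hx0 hn.symm

lemma tendsto_Hfun {x : ℝ} (hx1 : -(2 * Real.pi) < x) (hx2 : x < 2 * Real.pi) (hx0 : x ≠ 0) :
    Tendsto (fun ε : ℝ => Hfun (1 - ε) x) (𝓝[>] 0)
      (𝓝 (if 0 < x then (1 : ℝ) / 2 else -(1 / 2))) := by
  have hpi := Real.pi_pos
  have hc : Real.cos x ≠ 1 := cos_ne_one hx1 hx2 hx0
  have hc' : 0 < 1 - Real.cos x := by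
    rcases lt_or_eq_of_le (Real.cos_le_one x) with h | h
    · linarith
    · exact absurd h hc
  have hcont : ContinuousAt (fun ε : ℝ => Hfun (1 - ε) x) 0 := by
    unfold Hfun
    apply ContinuousAt.add continuousAt_const
    apply ContinuousAt.mul continuousAt_const
    apply Real.continuous_arctan.continuousAt.comp
    apply ContinuousAt.div (by fun_prop) (by fun_prop)
    simpa using ne_of_gt hc'
  have hval : Hfun 1 x = if 0 < x then (1 : ℝ) / 2 else -(1 / 2) := by
    unfold Hfun
    simp only [one_mul]
    rcases lt_trichotomy 0 x with h | h | h
    · rw [if_pos h, arctan_sin_div x h hx2]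
      field_simp
      ring
    · exact absurd h.symm hx0
    · rw [if_neg (by linarith)]
      have key := arctan_sin_div (-x) (by linarith) (by linarith)
      rw [Real.sin_neg, Real.cos_neg] at key
      have : Real.sin x / (1 - Real.cos x) = -(-Real.sin x / (1 - Real.cos x)) := by ring
      rw [this, Real.arctan_neg, key]
      field_simp
      ring
  have := hcont.tendsto
  rw [show Hfun (1 - 0) x = Hfun 1 x by norm_num] at this
  rw [hval] at this
  exact this.mono_left nhdsWithin_le_nhds

lemma continuous_Hfun {r : ℝ} (hr : |r| < 1) : Continuous (Hfun r) := by
  unfold Hfun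
  apply Continuous.add (by fun_prop)
  apply Continuous.mul continuous_const
  exact Real.continuous_arctan.comp
    (Continuous.div (by fun_prop) (by fun_prop) (fun u => ne_of_gt (den2_pos hr u)))

lemma tendsto_Hfun' {x : ℝ} (hx1 : -(2 * Real.pi) < x) (hx2 : x < 2 * Real.pi) :
    Tendsto (fun ε : ℝ => Hfun (1 - ε) x) (𝓝[>] 0)
      (𝓝 (if x = 0 then 0 else if 0 < x then (1 : ℝ) / 2 else -(1 / 2))) := by
  by_cases hx : x = 0
  · subst hx
    simp only [if_pos rfl, Hfun_zero]
    exact tendsto_const_nhds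
  · rw [if_neg hx]
    exact tendsto_Hfun hx1 hx2 hx

lemma eventual_eq_F (a b : ℝ) (θ : ℝ) :
    ∀ ε ∈ Set.Ioo (0:ℝ) 1,
      (∫ ψ in a..b, PoissonD (1 - ε) (ψ - θ)) = Hfun (1 - ε) (b - θ) - Hfun (1 - ε) (a - θ) := by
  intro ε hε
  have hr : |1 - ε| < 1 := by
    rw [abs_lt]; constructor <;> [linarith [hε.2]; linarith [hε.1]]
  rw [intervalIntegral.integral_comp_sub_right (fun u => PoissonD (1 - ε) u) θ,
    integral_poisson hr]

lemma key_tendsto (a b : ℝ) (ha : 0 ≤ a) (hab : a < b) (hb : b < 2 * Real.pi)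
    (θ : ℝ) (hθ : θ ∈ Set.Ico 0 (2 * Real.pi)) :
    Tendsto (fun ε : ℝ => ∫ ψ in a..b, PoissonD (1 - ε) (ψ - θ)) (𝓝[>] 0)
      (𝓝 ((Set.Ioo a b).indicator (fun _ => (1:ℝ)) θ +
          ({a, b} : Set ℝ).indicator (fun _ => (1/2:ℝ)) θ)) := by
  obtain ⟨hθ0, hθ2⟩ := hθ
  have hpi := Real.pi_pos
  have hb1 : -(2 * Real.pi) < b - θ := by linarith
  have hb2 : b - θ < 2 * Real.pi := by linarith
  have ha1 : -(2 * Real.pi) < a - θ := by linarith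
  have ha2 : a - θ < 2 * Real.pi := by linarith
  have hT := (tendsto_Hfun' hb1 hb2).sub (tendsto_Hfun' ha1 ha2)
  have heq : (fun ε : ℝ => Hfun (1 - ε) (b - θ) - Hfun (1 - ε) (a - θ)) =ᶠ[𝓝[>] (0:ℝ)]
      (fun ε : ℝ => ∫ ψ in a..b, PoissonD (1 - ε) (ψ - θ)) := by
    filter_upwards [Ioo_mem_nhdsGT_of_mem (by norm_num : (0:ℝ) ∈ Set.Ico 0 1)] with ε hε
    exact (eventual_eq_F a b θ ε hε).symm
  have hmain := hT.congr' heq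
  convert hmain using 2
  rcases lt_trichotomy θ a with h | h | h
  · have e1 : ¬(b - θ = 0) := by intro hc; linarith
    have e2 : ¬(a - θ = 0) := by intro hc; linarith
    have e3 : (0:ℝ) < b - θ := by linarith
    have e4 : (0:ℝ) < a - θ := by linarith
    rw [if_neg e1, if_pos e3, if_neg e2, if_pos e4]
    rw [Set.indicator_of_notMem (by simp [Set.mem_Ioo]; intro; linarith),
      Set.indicator_of_notMem (by simp; constructor <;> intro hc <;> linarith)]
    ring
  · subst h
    have e1 : ¬(b - θ = 0) := by intro hc; linarith
    have e3 : (0:ℝ) < b - θ := by linarith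
    rw [if_neg e1, if_pos e3, sub_self, if_pos rfl]
    rw [Set.indicator_of_notMem (by simp [Set.mem_Ioo]),
      Set.indicator_of_mem (by simp)]
    ring
  · rcases lt_trichotomy θ b with h' | h' | h'
    · have e1 : ¬(b - θ = 0) := by intro hc; linarith
      have e2 : ¬(a - θ = 0) := by intro hc; linarith
      have e3 : (0:ℝ) < b - θ := by linarith
      have e4 : ¬((0:ℝ) < a - θ) := by intro hc; linarith
      rw [if_neg e1, if_pos e3, if_neg e2, if_neg e4]
      rw [Set.indicator_of_mem (by simp [Set.mem_Ioo]; exact ⟨h, h'⟩),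
        Set.indicator_of_notMem (by simp; constructor <;> intro hc <;> linarith)]
      ring
    · subst h'
      have e2 : ¬(a - θ = 0) := by intro hc; linarith
      have e4 : ¬((0:ℝ) < a - θ) := by intro hc; linarith
      rw [sub_self, if_pos rfl, if_neg e2, if_neg e4]
      rw [Set.indicator_of_notMem (by simp [Set.mem_Ioo]),
        Set.indicator_of_mem (by simp)]
      ring
    · have e1 : ¬(b - θ = 0) := by intro hc; linarith
      have e2 : ¬(a - θ = 0) := by intro hc; linarith
      have e3 : ¬((0:ℝ) < b - θ) := by intro hc; linarith
      have e4 : ¬((0:ℝ) < a - θ) := by intro hc; linarith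
      rw [if_neg e1, if_neg e3, if_neg e2, if_neg e4]
      rw [Set.indicator_of_notMem (by simp [Set.mem_Ioo]; intro; linarith),
        Set.indicator_of_notMem (by simp; constructor <;> intro hc <;> linarith)]
      ring

lemma F_bounds (a b : ℝ) (ha : 0 ≤ a) (hab : a < b) (hb : b < 2 * Real.pi)
    {ε : ℝ} (hε : ε ∈ Set.Ioo (0:ℝ) 1) (θ : ℝ) :
    |∫ ψ in a..b, PoissonD (1 - ε) (ψ - θ)| ≤ 1 := by
  have hpi := Real.pi_pos
  have hr : |1 - ε| < 1 := by
    rw [abs_lt]; constructor <;> [linarith [hε.2]; linarith [hε.1]]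
  rw [intervalIntegral.integral_comp_sub_right (fun u => PoissonD (1 - ε) u) θ]
  rw [abs_le]
  constructor
  · have : (0:ℝ) ≤ ∫ u in (a - θ)..(b - θ), PoissonD (1 - ε) u :=
      intervalIntegral.integral_nonneg (by linarith) (fun u _ => poisson_nonneg hr u)
    linarith
  · have hmono : (∫ u in (a - θ)..(b - θ), PoissonD (1 - ε) u) ≤
        ∫ u in (a - θ)..(a - θ + 2 * Real.pi), PoissonD (1 - ε) u := by
      apply intervalIntegral.integral_mono_interval le_rfl (by linarith) (by linarith)
      · exact Filter.Eventually.of_forall (fun u => poisson_nonneg hr u)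
      · exact (continuous_poisson hr).intervalIntegrable _ _
    have : (∫ u in (a - θ)..(a - θ + 2 * Real.pi), PoissonD (1 - ε) u) = 1 := by
      rw [integral_poisson hr, Hfun_period]; ring
    linarith

lemma poisson_le {r : ℝ} (h0 : 0 ≤ r) (h1 : r < 1) (u : ℝ) :
    PoissonD r u ≤ 1 / (2 * Real.pi) * (1 - r ^ 2) / (1 - r) ^ 2 := by
  have hpi := Real.pi_pos
  have hr : |r| < 1 := by rw [abs_lt]; constructor <;> linarith
  have hD := denom_pos hr u
  have hle : (1 - r) ^ 2 ≤ 1 - 2 * r * Real.cos u + r ^ 2 := by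
    nlinarith [Real.cos_le_one u]
  unfold PoissonD
  gcongr
  · apply mul_nonneg (by positivity)
    nlinarith

theorem stmt6 (μ : Measure ℝ) [IsFiniteMeasure μ]
    (hsupp : μ (Set.Ico 0 (2 * Real.pi))ᶜ = 0)
    (a b : ℝ) (ha : 0 ≤ a) (hab : a < b) (hb : b < 2 * Real.pi) :
    Tendsto
      (fun ε : ℝ => ∫ ψ in a..b, ∫ θ in Set.Ico 0 (2 * Real.pi), PoissonD (1 - ε) (ψ - θ) ∂μ)
      (𝓝[>] 0)
      (𝓝 ((μ (Set.Ioo a b)).toReal + (1 / 2) * (μ ({a, b} : Set ℝ)).toReal)) := by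
  have hpi := Real.pi_pos
  set I : Set ℝ := Set.Ico 0 (2 * Real.pi) with hI
  have hIoo_sub : Set.Ioo a b ⊆ I := fun x hx => ⟨by linarith [hx.1], by linarith [hx.2]⟩
  have hab_sub : ({a, b} : Set ℝ) ⊆ I := by
    intro x hx
    rcases hx with h | h <;> subst h
    · exact ⟨ha, by linarith⟩
    · exact ⟨by linarith, hb⟩
  -- the limit function
  set g : ℝ → ℝ := fun θ => (Set.Ioo a b).indicator (fun _ => (1:ℝ)) θ +
      ({a, b} : Set ℝ).indicator (fun _ => (1/2:ℝ)) θ with hg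
  -- Fubini for each ε ∈ (0,1)
  have hswap : ∀ ε ∈ Set.Ioo (0:ℝ) 1,
      (∫ ψ in a..b, ∫ θ in I, PoissonD (1 - ε) (ψ - θ) ∂μ)
        = ∫ θ in I, (∫ ψ in a..b, PoissonD (1 - ε) (ψ - θ)) ∂μ := by
    intro ε hε
    have hr : |1 - ε| < 1 := by
      rw [abs_lt]; constructor <;> [linarith [hε.2]; linarith [hε.1]]
    have hfin : IsFiniteMeasure (volume.restrict (Set.Ioc a b)) := by
      constructor
      rw [Measure.restrict_apply_univ]
      exact measure_Ioc_lt_top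
    have hcont : Continuous (Function.uncurry fun ψ θ : ℝ => PoissonD (1 - ε) (ψ - θ)) := by
      apply (continuous_poisson hr).comp
      exact continuous_fst.sub continuous_snd
    have hint : Integrable (Function.uncurry fun ψ θ : ℝ => PoissonD (1 - ε) (ψ - θ))
        ((volume.restrict (Set.Ioc a b)).prod (μ.restrict I)) := by
      apply Integrable.mono' (integrable_const (1 / (2 * Real.pi) * (1 - (1-ε) ^ 2) / (1 - (1-ε)) ^ 2))
        hcont.aestronglyMeasurable
      apply ae_of_all
      rintro ⟨ψ, θ⟩
      rw [Real.norm_eq_abs, Function.uncurry, abs_of_nonneg (poisson_nonneg hr _)]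
      exact poisson_le (by linarith [hε.2]) (by linarith [hε.1]) _
    simp only [intervalIntegral.integral_of_le hab.le]
    exact MeasureTheory.integral_integral_swap hint
  -- dominated convergence
  have hdct : Tendsto
      (fun ε : ℝ => ∫ θ in I, (∫ ψ in a..b, PoissonD (1 - ε) (ψ - θ)) ∂μ)
      (𝓝[>] 0) (𝓝 (∫ θ in I, g θ ∂μ)) := by
    have hIoo01 : Set.Ioo (0:ℝ) 1 ∈ 𝓝[>] (0:ℝ) :=
      Ioo_mem_nhdsGT_of_mem (by norm_num : (0:ℝ) ∈ Set.Ico 0 1)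
    apply tendsto_integral_filter_of_dominated_convergence (fun _ => (1:ℝ))
    · filter_upwards [hIoo01] with ε hε
      have hr : |1 - ε| < 1 := by
        rw [abs_lt]; constructor <;> [linarith [hε.2]; linarith [hε.1]]
      have : (fun θ => ∫ ψ in a..b, PoissonD (1 - ε) (ψ - θ))
          = fun θ => Hfun (1 - ε) (b - θ) - Hfun (1 - ε) (a - θ) :=
        funext fun θ => eventual_eq_F a b θ ε hε
      rw [this]
      exact (((continuous_Hfun hr).comp (continuous_const.sub continuous_id)).sub
        ((continuous_Hfun hr).comp (continuous_const.sub continuous_id))).aestronglyMeasurable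
    · filter_upwards [hIoo01] with ε hε
      exact ae_of_all _ fun θ => by
        simpa [Real.norm_eq_abs] using F_bounds a b ha hab hb hε θ
    · exact integrable_const 1
    · exact (ae_restrict_mem measurableSet_Ico).mono
        (fun θ hθ => key_tendsto a b ha hab hb θ hθ)
  -- value of the limit integral
  have hval : ∫ θ in I, g θ ∂μ
      = (μ (Set.Ioo a b)).toReal + (1 / 2) * (μ ({a, b} : Set ℝ)).toReal := by
    have hm1 : MeasurableSet (Set.Ioo a b) := measurableSet_Ioo
    have hm2 : MeasurableSet ({a, b} : Set ℝ) := (measurableSet_singleton b).insert a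
    have hint1 : Integrable ((Set.Ioo a b).indicator (fun _ => (1:ℝ))) (μ.restrict I) :=
      (integrable_const (1:ℝ)).indicator hm1
    have hint2 : Integrable (({a, b} : Set ℝ).indicator (fun _ => (1/2:ℝ))) (μ.restrict I) :=
      (integrable_const ((1:ℝ)/2)).indicator hm2
    rw [hg]
    rw [integral_add hint1 hint2]
    rw [integral_indicator_const _ hm1, integral_indicator_const _ hm2]
    rw [measureReal_restrict_apply hm1, measureReal_restrict_apply hm2,
      Set.inter_eq_self_of_subset_left hIoo_sub, Set.inter_eq_self_of_subset_left hab_sub]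
    simp [smul_eq_mul, measureReal_def]
    ring
  rw [← hval]
  apply hdct.congr'
  filter_upwards [Ioo_mem_nhdsGT_of_mem (by norm_num : (0:ℝ) ∈ Set.Ico 0 1)] with ε hε
  rw [hswap ε hε]
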